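/- Let M be a 3×3 complex matrix, and consider the representation of the 3-Kronecker quiver of dimension vector (2,3) whose triple of maps ρ₁, ρ₂, ρ₃ : ℂ² → ℂ³ is given by letting ρ_k(s,t) be the k-th column of the matrix s·I₃ + t·M. This representation is stable if and only if rank(M − λ·I₃) ≥ 2 for every λ ∈ ℂ, i.e., every eigenvalue of M has geometric multiplicity at most 1. -/

import Mathlib

noncomputable section

/-- Stability (for the stability parameter θ = (3,−2)) of a representation `(ρ₁,ρ₂,ρ₃)` of the
3-Kronecker quiver of dimension vector (2,3): for every subrepresentation `(U₁, U₂)` other than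
`(0,0)` and `(ℂ², ℂ³)` one has `3·dim U₁ < 2·dim U₂`. -/
def KStable (ρ : Fin 3 → ((Fin 2 → ℂ) →ₗ[ℂ] (Fin 3 → ℂ))) : Prop :=
  ∀ (U₁ : Submodule ℂ (Fin 2 → ℂ)) (U₂ : Submodule ℂ (Fin 3 → ℂ)),
    (∀ k, U₁.map (ρ k) ≤ U₂) →
    ¬(U₁ = ⊥ ∧ U₂ = ⊥) → ¬(U₁ = ⊤ ∧ U₂ = ⊤) →
    3 * Module.finrank ℂ U₁ < 2 * Module.finrank ℂ U₂

/-- The representation of the 3-Kronecker quiver of dimension vector `(2,3)` associated to a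
3×3 matrix `M`: `ρ_k (s,t)` is the `k`-th column of `s·I₃ + t·M`. -/
def repOfMatrix (M : Matrix (Fin 3) (Fin 3) ℂ) (k : Fin 3) :
    (Fin 2 → ℂ) →ₗ[ℂ] (Fin 3 → ℂ) :=
  (LinearMap.proj (0 : Fin 2) : (Fin 2 → ℂ) →ₗ[ℂ] ℂ).smulRight
      (fun j => (1 : Matrix (Fin 3) (Fin 3) ℂ) j k) +
    (LinearMap.proj (1 : Fin 2) : (Fin 2 → ℂ) →ₗ[ℂ] ℂ).smulRight (fun j => M j k)

/-!
For `v = (s,t) ∈ ℂ²` the vectors `ρ₁ v, ρ₂ v, ρ₃ v` are the columns of the pencil matrix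
`s·I₃ + t·M`, so any subrepresentation `(U₁, U₂)` with `v ∈ U₁` has `dim U₂ ≥ rank(s·I₃ + t·M)`.
Up to a nonzero scalar this pencil is `I₃` (if `t = 0`) or `M - λ·I₃` with `λ = -s/t`.
If all these ranks are at least 2, a line `U₁` forces `dim U₂ ≥ 2`, and `U₁ = ℂ²` forces
`U₂ = ℂ³` (take `v = (1,0)`), so no subrepresentation destabilizes.
Conversely, if `rank(M - λ·I₃) ≤ 1`, the line through `(-λ, 1)` together with the column space
of `M - λ·I₃` is a destabilizing subrepresentation.
-/

namespace Matrix

variable {K n : Type*} [Field K] [DecidableEq n]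

def pencil (M : Matrix n n K) (v : Fin 2 → K) : Matrix n n K :=
  v 0 • 1 + v 1 • M

lemma pencil_neg_one (M : Matrix n n K) (lam : K) : pencil M ![-lam, 1] = M - lam • 1 := by
  simp only [pencil, Matrix.cons_val_zero, Matrix.cons_val_one, one_smul, neg_smul]
  abel

lemma pencil_single_zero_one (M : Matrix n n K) : pencil M (Pi.single 0 1) = 1 := by
  simp [pencil]

lemma pencil_eq_smul_sub {v : Fin 2 → K} (hv : v 1 ≠ 0) (M : Matrix n n K) :
    pencil M v = v 1 • (M - (-v 0 / v 1) • 1) := by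
  rw [pencil, smul_sub, smul_smul, mul_div_cancel₀ _ hv, neg_smul, sub_neg_eq_add, add_comm]

lemma le_rank_pencil [Fintype n] {M : Matrix n n K} {r : ℕ} (hr : r ≤ Fintype.card n)
    (hM : ∀ lam : K, r ≤ (M - lam • 1).rank) {v : Fin 2 → K} (hv : v ≠ 0) :
    r ≤ (pencil M v).rank := by
  by_cases h1 : v 1 = 0
  · have h0 : v 0 ≠ 0 := fun h0 => hv (by ext i; fin_cases i <;> assumption)
    rwa [pencil, h1, zero_smul, add_zero,
      rank_smul_of_mem_nonZeroDivisors _ (mem_nonZeroDivisors_of_ne_zero h0), rank_one]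
  · rw [pencil_eq_smul_sub h1,
      rank_smul_of_mem_nonZeroDivisors _ (mem_nonZeroDivisors_of_ne_zero h1)]
    exact hM _

end Matrix

open Matrix Module

section KroneckerPencil

variable {M : Matrix (Fin 3) (Fin 3) ℂ}

lemma repOfMatrix_apply (M : Matrix (Fin 3) (Fin 3) ℂ) (k : Fin 3) (v : Fin 2 → ℂ) :
    repOfMatrix M k v = (pencil M v).col k := by
  ext j
  simp [repOfMatrix, pencil, mul_comm]

lemma rank_pencil_le_finrank {U₁ : Submodule ℂ (Fin 2 → ℂ)} {U₂ : Submodule ℂ (Fin 3 → ℂ)}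
    (hU : ∀ k, U₁.map (repOfMatrix M k) ≤ U₂) {v : Fin 2 → ℂ} (hv : v ∈ U₁) :
    (pencil M v).rank ≤ finrank ℂ U₂ := by
  rw [rank_eq_finrank_span_cols]
  refine Submodule.finrank_mono (Submodule.span_le.mpr (Set.range_subset_iff.mpr fun k => ?_))
  exact hU k ⟨v, hv, repOfMatrix_apply M k v⟩

lemma map_span_singleton_repOfMatrix_le (M : Matrix (Fin 3) (Fin 3) ℂ) (v : Fin 2 → ℂ)
    (k : Fin 3) : (ℂ ∙ v).map (repOfMatrix M k) ≤ LinearMap.range (pencil M v).mulVecLin := by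
  rw [Submodule.map_span, Set.image_singleton, Submodule.span_singleton_le_iff_mem,
    range_mulVecLin, repOfMatrix_apply]
  exact Submodule.subset_span ⟨k, rfl⟩

lemma eq_top_of_map_top_repOfMatrix_le {U₂ : Submodule ℂ (Fin 3 → ℂ)}
    (hU : ∀ k, (⊤ : Submodule ℂ (Fin 2 → ℂ)).map (repOfMatrix M k) ≤ U₂) : U₂ = ⊤ := by
  have h := rank_pencil_le_finrank hU (Submodule.mem_top (x := Pi.single 0 1))
  rw [pencil_single_zero_one, rank_one, Fintype.card_fin] at h
  exact Submodule.eq_top_of_finrank_eq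
    (le_antisymm (Submodule.finrank_le U₂) (by simpa [finrank_fin_fun] using h))

theorem two_le_rank_of_kStable (hM : KStable (repOfMatrix M)) (lam : ℂ) :
    2 ≤ (M - lam • 1).rank := by
  have hv : (![-lam, 1] : Fin 2 → ℂ) ≠ 0 := fun h => by simpa using congrFun h 1
  have hdim := finrank_span_singleton (K := ℂ) hv
  have h := hM _ _ (map_span_singleton_repOfMatrix_le M ![-lam, 1])
    (fun h => hv (by simpa using h.1)) fun h => by
      rw [h.1, finrank_top, finrank_fin_fun] at hdim
      omega
  have hrank : (pencil M ![-lam, 1]).rank =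
      finrank ℂ (LinearMap.range (pencil M ![-lam, 1]).mulVecLin) := rfl
  rw [hdim, ← hrank, pencil_neg_one] at h
  omega

theorem kStable_repOfMatrix (hM : ∀ lam : ℂ, 2 ≤ (M - lam • 1).rank) :
    KStable (repOfMatrix M) := by
  intro U₁ U₂ hU hbot htop
  have hle := Submodule.finrank_le U₁
  rw [finrank_fin_fun] at hle
  obtain h0 | h1 | h2 : finrank ℂ U₁ = 0 ∨ finrank ℂ U₁ = 1 ∨ finrank ℂ U₁ = 2 := by omega
  · have hU₁ : U₁ = ⊥ := Submodule.finrank_eq_zero.mp h0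
    have hU₂ : finrank ℂ U₂ ≠ 0 := fun h => hbot ⟨hU₁, Submodule.finrank_eq_zero.mp h⟩
    omega
  · obtain ⟨v, hv, hv0⟩ := Submodule.exists_mem_ne_zero_of_ne_bot
      (Submodule.one_le_finrank_iff.mp h1.ge)
    have := (le_rank_pencil (by simp) hM hv0).trans (rank_pencil_le_finrank hU hv)
    omega
  · obtain rfl : U₁ = ⊤ := Submodule.eq_top_of_finrank_eq (by simpa [finrank_fin_fun] using h2)
    exact absurd ⟨rfl, eq_top_of_map_top_repOfMatrix_le hU⟩ htop

end KroneckerPencil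

/-- The representation `ρ_k (s,t) = (k-th column of s·I₃ + t·M)` of the
3-Kronecker quiver of dimension vector `(2,3)` is stable if and only if
`rank(M − λ·I₃) ≥ 2` for every `λ ∈ ℂ`, i.e. every eigenvalue of `M` has geometric
multiplicity at most 1. -/
theorem stmt9 (M : Matrix (Fin 3) (Fin 3) ℂ) :
    KStable (repOfMatrix M) ↔
      ∀ lam : ℂ, 2 ≤ (M - lam • (1 : Matrix (Fin 3) (Fin 3) ℂ)).rank :=
  ⟨two_le_rank_of_kStable, kStable_repOfMatrix⟩
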